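/- Suppose u ∈ U satisfies B(w,u) = L(w) for all w ∈ W and u_n is the Petrov-Galerkin solution with optimal test functions over U_n ⊆ U. If B satisfies continuity (C₁) and both inf-sup conditions (C₂, C₃ > 0), then ‖u − u_n‖_U ≤ (C₁/C₃) · inf_{v ∈ U_n} ‖u − v‖_U. -/

import Mathlib

/-!
With the trial-to-test operator `T`, the energy norm `|||v||| = ‖T v‖` is the norm of `T v` in `W`,
and the Petrov–Galerkin equations say exactly that `T (u - uₙ)` is orthogonal to `T v` for all
`v ∈ Uₙ`. Pythagoras then makes `uₙ` the best approximation of `u` from `Uₙ` in the energy norm,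
and the energy norm is equivalent to `‖·‖_U`: `C₃ ‖v‖ ≤ ‖T v‖` by the inf-sup condition and
Cauchy–Schwarz, `‖T v‖ ≤ C₁ ‖v‖` by continuity of `B` applied to `w = T v`.
-/

open scoped RealInnerProductSpace

section InnerProductSpace

variable {E : Type*} [NormedAddCommGroup E] [InnerProductSpace ℝ E]

theorem iSup_inner_div_norm_le (x : E) :
    ⨆ w : {w : E // w ≠ 0}, ⟪w.1, x⟫ / ‖w.1‖ ≤ ‖x‖ := by
  refine Real.iSup_le (fun ⟨w, hw⟩ => ?_) (norm_nonneg x)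
  rw [div_le_iff₀ (norm_pos_iff.mpr hw), mul_comm]
  exact real_inner_le_norm w x

theorem norm_le_norm_add_of_inner_eq_zero {x y : E} (h : ⟪x, y⟫ = 0) : ‖x‖ ≤ ‖x + y‖ := by
  refine le_of_sq_le_sq ?_ (norm_nonneg _)
  rw [norm_add_sq_real, h, mul_zero, add_zero]
  exact le_add_of_nonneg_right (sq_nonneg _)

end InnerProductSpace

section TrialToTest

variable {U W : Type*} [NormedAddCommGroup U] [InnerProductSpace ℝ U]
  [NormedAddCommGroup W] [InnerProductSpace ℝ W]
  {B : W →ₗ[ℝ] U →ₗ[ℝ] ℝ} {T : U →ₗ[ℝ] W}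

theorem mul_norm_le_norm_trialToTest (hT : ∀ w u, ⟪w, T u⟫ = B w u) {C₃ : ℝ} {u : U}
    (hinfsup : C₃ * ‖u‖ ≤ ⨆ w : {w : W // w ≠ 0}, B w.1 u / ‖w.1‖) :
    C₃ * ‖u‖ ≤ ‖T u‖ := by
  simp only [← hT] at hinfsup
  exact hinfsup.trans (iSup_inner_div_norm_le (T u))

theorem norm_trialToTest_le (hT : ∀ w u, ⟪w, T u⟫ = B w u) {C₁ : ℝ} (hC₁ : 0 ≤ C₁)
    (hB : ∀ w u, B w u ≤ C₁ * ‖w‖ * ‖u‖) (u : U) :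
    ‖T u‖ ≤ C₁ * ‖u‖ := by
  have hsq : ‖T u‖ ^ 2 ≤ C₁ * ‖u‖ * ‖T u‖ := by
    calc ‖T u‖ ^ 2 = B (T u) u := by rw [← hT, real_inner_self_eq_norm_sq]
      _ ≤ C₁ * ‖T u‖ * ‖u‖ := hB _ _
      _ = C₁ * ‖u‖ * ‖T u‖ := by ring
  nlinarith [norm_nonneg (T u), norm_nonneg u, mul_nonneg hC₁ (norm_nonneg u)]

theorem inner_trialToTest_eq_zero_of_mem_span (hT : ∀ w u, ⟪w, T u⟫ = B w u)
    {ι : Type*} {e : ι → U} {x : U} (horth : ∀ i, B (T (e i)) x = 0)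
    {v : U} (hv : v ∈ Submodule.span ℝ (Set.range e)) :
    ⟪T v, T x⟫ = 0 := by
  have hker : Submodule.span ℝ (Set.range e) ≤ LinearMap.ker ((B.flip x).comp T) := by
    rw [Submodule.span_le]
    rintro _ ⟨i, rfl⟩
    exact horth i
  rw [hT]
  exact hker hv

end TrialToTest

theorem stmt19_general {U W : Type*}
    [NormedAddCommGroup U] [InnerProductSpace ℝ U]
    [NormedAddCommGroup W] [InnerProductSpace ℝ W]
    (B : W →ₗ[ℝ] U →ₗ[ℝ] ℝ) (C₁ C₃ : ℝ)
    (hC₁ : 0 < C₁) (hC₃ : 0 < C₃)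
    (hB : ∀ (w : W) (u : U), B w u ≤ C₁ * ‖w‖ * ‖u‖)
    (hinfsup₃ : ∀ u : U, C₃ * ‖u‖ ≤ ⨆ w : {w : W // w ≠ 0}, B w.1 u / ‖w.1‖)
    (L : W →L[ℝ] ℝ)
    (T : U →ₗ[ℝ] W) (hT : ∀ (w : W) (u : U), ⟪w, T u⟫ = B w u)
    (n : ℕ) (e : Fin n → U) (u uₙ : U)
    (hu : ∀ w : W, B w u = L w)
    (huₙ_mem : uₙ ∈ Submodule.span ℝ (Set.range e))
    (huₙ : ∀ i : Fin n, B (T (e i)) uₙ = L (T (e i))) :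
    ∀ v ∈ Submodule.span ℝ (Set.range e),
      ‖u - uₙ‖ ≤ (C₁ / C₃) * ‖u - v‖ := by
  intro v hv
  have horth : ⟪T (u - uₙ), T (uₙ - v)⟫ = 0 := by
    rw [real_inner_comm]
    refine inner_trialToTest_eq_zero_of_mem_span hT (fun i => ?_) (Submodule.sub_mem _ huₙ_mem hv)
    rw [map_sub, hu, huₙ, sub_self]
  have hbest : ‖T (u - uₙ)‖ ≤ ‖T (u - v)‖ := by
    simpa only [← map_add, sub_add_sub_cancel] using norm_le_norm_add_of_inner_eq_zero horth
  rw [div_mul_eq_mul_div, le_div_iff₀ hC₃, mul_comm]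
  calc C₃ * ‖u - uₙ‖ ≤ ‖T (u - uₙ)‖ := mul_norm_le_norm_trialToTest hT (hinfsup₃ _)
    _ ≤ ‖T (u - v)‖ := hbest
    _ ≤ C₁ * ‖u - v‖ := norm_trialToTest_le hT hC₁.le hB _

theorem stmt19 {U W : Type*}
    [NormedAddCommGroup U] [InnerProductSpace ℝ U] [CompleteSpace U]
    [NormedAddCommGroup W] [InnerProductSpace ℝ W] [CompleteSpace W]
    (B : W →ₗ[ℝ] U →ₗ[ℝ] ℝ) (C₁ C₂ C₃ : ℝ)
    (hC₁ : 0 < C₁) (hC₂ : 0 < C₂) (hC₃ : 0 < C₃)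
    (hB : ∀ (w : W) (u : U), B w u ≤ C₁ * ‖w‖ * ‖u‖)
    (hinfsup₂ : ∀ w : W, C₂ * ‖w‖ ≤ ⨆ u : {u : U // u ≠ 0}, B w u.1 / ‖u.1‖)
    (hinfsup₃ : ∀ u : U, C₃ * ‖u‖ ≤ ⨆ w : {w : W // w ≠ 0}, B w.1 u / ‖w.1‖)
    (L : W →L[ℝ] ℝ)
    (T : U →ₗ[ℝ] W) (hT : ∀ (w : W) (u : U), ⟪w, T u⟫ = B w u)
    (n : ℕ) (e : Fin n → U) (u uₙ : U)
    (hu : ∀ w : W, B w u = L w)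
    (huₙ_mem : uₙ ∈ Submodule.span ℝ (Set.range e))
    (huₙ : ∀ i : Fin n, B (T (e i)) uₙ = L (T (e i))) :
    ∀ v ∈ Submodule.span ℝ (Set.range e),
      ‖u - uₙ‖ ≤ (C₁ / C₃) * ‖u - v‖ :=
  stmt19_general B C₁ C₃ hC₁ hC₃ hB hinfsup₃ L T hT n e u uₙ hu huₙ_mem huₙ
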